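/- arXiv:1502.02954 — 6 statements merged into one kernel-verified Lean document; each statement's English description precedes it below -/
import Mathlib

section
/- For quaternions s, x with x ∉ [s] (i.e. x is not in the 2-sphere determined by s), the left and right noncommutative Cauchy kernels satisfy the identity S_L^{-1}(s,x) = -S_R^{-1}(x,s). -/
open scoped Quaternion

noncomputable section

/-- An imaginary unit quaternion. -/
def QUnit (I : ℍ[ℝ]) : Prop := I.re = 0 ∧ ‖I‖ = 1

/-- The 2-sphere `[s] = {Re(s) + |Im(s)| • I : I ∈ 𝕊}` associated to a quaternion `s`. -/
def qSphere (s : ℍ[ℝ]) : Set ℍ[ℝ] :=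
  {x | ∃ I : ℍ[ℝ], QUnit I ∧ x = (s.re : ℍ[ℝ]) + ‖s.im‖ • I}

/-- The right noncommutative Cauchy kernel `S_R^{-1}(s,x)`. -/
def SR (s x : ℍ[ℝ]) : ℍ[ℝ] :=
  -((x - star s) * (x ^ 2 - 2 * (s.re : ℍ[ℝ]) * x + ((‖s‖ ^ 2 : ℝ) : ℍ[ℝ]))⁻¹)

/-- The left noncommutative Cauchy kernel `S_L^{-1}(s,x)`. -/
def SL (s x : ℍ[ℝ]) : ℍ[ℝ] :=
  -((x ^ 2 - 2 * (s.re : ℍ[ℝ]) * x + ((‖s‖ ^ 2 : ℝ) : ℍ[ℝ]))⁻¹ * (x - star s))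

open Quaternion

lemma norm_sq_eq_normSq' (a : ℍ[ℝ]) : (‖a‖ : ℝ) ^ 2 = normSq a := by
  rw [sq, ← normSq_eq_norm_mul_self]

lemma quat_sq (b : ℍ[ℝ]) :
    b ^ 2 = ((2 * b.re : ℝ) : ℍ[ℝ]) * b - ((normSq b : ℝ) : ℍ[ℝ]) := by
  have h1 : ((2 * b.re : ℝ) : ℍ[ℝ]) = b + star b := by
    rw [Quaternion.star_eq_two_re_sub]; abel
  rw [h1, ← Quaternion.star_mul_self b, sq]
  noncomm_ring

lemma lin (a b : ℍ[ℝ]) :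
    b ^ 2 - 2 * (a.re : ℍ[ℝ]) * b + ((‖a‖ ^ 2 : ℝ) : ℍ[ℝ]) =
    ((2 * (b.re - a.re) : ℝ) : ℍ[ℝ]) * b + ((normSq a - normSq b : ℝ) : ℍ[ℝ]) := by
  have h2 : (2 : ℍ[ℝ]) * ((a.re : ℝ) : ℍ[ℝ]) = ((2 * a.re : ℝ) : ℍ[ℝ]) := by
    rw [Quaternion.coe_mul, show ((2:ℝ):ℍ[ℝ]) = 2 from by norm_cast]
  rw [quat_sq, norm_sq_eq_normSq', h2,
    show ((2 * (b.re - a.re) : ℝ) : ℍ[ℝ]) = ((2 * b.re : ℝ) : ℍ[ℝ]) - ((2 * a.re : ℝ) : ℍ[ℝ])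
      by push_cast; noncomm_ring,
    show ((normSq a - normSq b : ℝ) : ℍ[ℝ]) = ((normSq a : ℝ) : ℍ[ℝ]) - ((normSq b : ℝ) : ℍ[ℝ])
      by push_cast; noncomm_ring,
    sub_mul]
  abel

lemma qzero_aux (a b : ℍ[ℝ])
    (h : b ^ 2 - 2 * (a.re : ℍ[ℝ]) * b + ((‖a‖ ^ 2 : ℝ) : ℍ[ℝ]) = 0) :
    b.re = a.re ∧ normSq b = normSq a := by
  rw [lin] at h
  have h1 := congrArg QuaternionAlgebra.re h
  have h2 := congrArg QuaternionAlgebra.imI h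
  have h3 := congrArg QuaternionAlgebra.imJ h
  have h4 := congrArg QuaternionAlgebra.imK h
  simp only [Quaternion.re_add, Quaternion.re_mul, Quaternion.re_coe, Quaternion.imI_coe,
    Quaternion.imJ_coe, Quaternion.imK_coe, Quaternion.imI_add, Quaternion.imI_mul,
    Quaternion.imJ_add, Quaternion.imJ_mul, Quaternion.imK_add, Quaternion.imK_mul,
    Quaternion.re_zero, Quaternion.imI_zero, Quaternion.imJ_zero, Quaternion.imK_zero] at h1 h2 h3 h4
  have hre : b.re = a.re := by
    by_contra hne
    have hc : 2 * (b.re - a.re) ≠ 0 := by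
      intro hc; exact hne (by linarith)
    have hI : b.imI = 0 := by
      rcases mul_eq_zero.1 (show 2 * (b.re - a.re) * b.imI = 0 by linarith [h2]) with h | h
      exacts [absurd h hc, h]
    have hJ : b.imJ = 0 := by
      rcases mul_eq_zero.1 (show 2 * (b.re - a.re) * b.imJ = 0 by linarith [h3]) with h | h
      exacts [absurd h hc, h]
    have hK : b.imK = 0 := by
      rcases mul_eq_zero.1 (show 2 * (b.re - a.re) * b.imK = 0 by linarith [h4]) with h | h
      exacts [absurd h hc, h]
    rw [normSq_def', normSq_def', hI, hJ, hK] at h1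
    have hsum : (b.re - a.re) ^ 2 + a.imI ^ 2 + a.imJ ^ 2 + a.imK ^ 2 = 0 := by
      linear_combination h1
    have h5 : (b.re - a.re) ^ 2 ≤ 0 := by
      nlinarith [sq_nonneg a.imI, sq_nonneg a.imJ, sq_nonneg a.imK]
    have h6 : b.re - a.re = 0 :=
      sq_eq_zero_iff.mp (le_antisymm h5 (sq_nonneg _))
    exact hne (by linarith)
  refine ⟨hre, ?_⟩
  rw [normSq_def', normSq_def', hre]
  rw [normSq_def', normSq_def', hre] at h1
  linarith [h1]

/-- A fixed imaginary unit. -/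
def myI : ℍ[ℝ] := ⟨0, 1, 0, 0⟩

lemma normSq_myI : normSq myI = 1 := by
  rw [normSq_def']; norm_num [myI]

lemma norm_myI : ‖myI‖ = 1 := by
  have h : ‖myI‖ ^ 2 = 1 := by rw [norm_sq_eq_normSq', normSq_myI]
  calc ‖myI‖ = Real.sqrt (‖myI‖ ^ 2) := (Real.sqrt_sq (norm_nonneg _)).symm
    _ = 1 := by rw [h, Real.sqrt_one]

lemma mem_qSphere (s x : ℍ[ℝ]) (hre : x.re = s.re) (hns : normSq x = normSq s) :
    x ∈ qSphere s := by
  have him : ‖x.im‖ = ‖s.im‖ := by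
    have him2 : ‖x.im‖ ^ 2 = ‖s.im‖ ^ 2 := by
      rw [norm_sq_eq_normSq', norm_sq_eq_normSq', normSq_def', normSq_def']
      rw [normSq_def', normSq_def', hre] at hns
      simp only [Quaternion.re_im, Quaternion.imI_im, Quaternion.imJ_im, Quaternion.imK_im]
      linarith
    have := congrArg Real.sqrt him2
    rwa [Real.sqrt_sq (norm_nonneg _), Real.sqrt_sq (norm_nonneg _)] at this
  by_cases h0 : x.im = 0
  · refine ⟨myI, ⟨rfl, norm_myI⟩, ?_⟩
    have hsim : ‖s.im‖ = 0 := by rw [← him, h0, norm_zero]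
    have hx : x = ((x.re : ℝ) : ℍ[ℝ]) := by
      conv_lhs => rw [← Quaternion.re_add_im x]
      rw [h0, add_zero]
    rw [hsim, zero_smul, add_zero, hx, hre]
  · refine ⟨‖x.im‖⁻¹ • x.im, ⟨?_, ?_⟩, ?_⟩
    · simp [Quaternion.re_smul]
    · rw [norm_smul, Real.norm_eq_abs, abs_inv, abs_of_nonneg (norm_nonneg _),
        inv_mul_cancel₀ (norm_ne_zero_iff.2 h0)]
    · rw [← him, smul_smul, mul_inv_cancel₀ (norm_ne_zero_iff.2 h0), one_smul, ← hre,
        Quaternion.re_add_im]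

set_option maxHeartbeats 1000000 in
theorem stmt0 (s x : ℍ[ℝ]) (hx : x ∉ qSphere s) : SL s x = - SR x s := by
  set A : ℍ[ℝ] := x ^ 2 - 2 * (s.re : ℍ[ℝ]) * x + ((‖s‖ ^ 2 : ℝ) : ℍ[ℝ]) with hAdef
  set B : ℍ[ℝ] := s ^ 2 - 2 * (x.re : ℍ[ℝ]) * s + ((‖x‖ ^ 2 : ℝ) : ℍ[ℝ]) with hBdef
  have hA : A ≠ 0 := fun h => hx (mem_qSphere s x (qzero_aux s x h).1 (qzero_aux s x h).2)
  have hB : B ≠ 0 := fun h => hx (mem_qSphere s x (qzero_aux x s h).1.symm (qzero_aux x s h).2.symm)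
  have key : (star s - x) * B = A * (s - star x) := by
    rw [hAdef, hBdef, lin s x, lin x s]
    simp only [normSq_def']
    ext <;>
      simp only [Quaternion.re_mul, Quaternion.imI_mul, Quaternion.imJ_mul, Quaternion.imK_mul,
        Quaternion.re_add, Quaternion.imI_add, Quaternion.imJ_add, Quaternion.imK_add,
        Quaternion.re_sub, Quaternion.imI_sub, Quaternion.imJ_sub, Quaternion.imK_sub,
        Quaternion.re_coe, Quaternion.imI_coe, Quaternion.imJ_coe, Quaternion.imK_coe,
        Quaternion.re_star, Quaternion.imI_star, Quaternion.imJ_star, Quaternion.imK_star] <;>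
      ring
  have hstep : star s - x = A * (s - star x) * B⁻¹ :=
    (eq_mul_inv_iff_mul_eq₀ hB).2 key
  have hsl : SL s x = A⁻¹ * (star s - x) := by
    rw [SL, ← hAdef, ← mul_neg, neg_sub]
  rw [hsl, hstep, ← mul_assoc, ← mul_assoc, inv_mul_cancel₀ hA, one_mul, SR, ← hBdef, neg_neg]
end
end

section
/- For quaternions s, x with Re(s) > Re(x), the integral ∫₀^∞ e^{-st} e^{xt} dt converges and equals the right Cauchy kernel S_R^{-1}(s,x) = -(x - conj(s))·(x² - 2·Re(s)·x + |s|²)^{-1}. -/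
open scoped Quaternion
open MeasureTheory

noncomputable section

theorem quadSelf (q : ℍ[ℝ]) : q ^ 2 - 2 * (q.re : ℍ[ℝ]) * q + ((‖q‖ ^ 2 : ℝ) : ℍ[ℝ]) = 0 := by
  have h3 : (Quaternion.normSq q : ℝ) = ‖q‖ ^ 2 := by
    rw [Quaternion.normSq_eq_norm_mul_self, sq]
  have h2 : (2 : ℍ[ℝ]) = ((2 : ℝ) : ℍ[ℝ]) := rfl
  rw [← h3, h2]
  ext <;>
    simp [pow_two, Quaternion.re_mul, Quaternion.imI_mul, Quaternion.imJ_mul,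
      Quaternion.imK_mul, Quaternion.normSq_def'] <;> ring

theorem Pne (s x : ℍ[ℝ]) (h : x.re < s.re) :
    x ^ 2 - 2 * (s.re : ℍ[ℝ]) * x + ((‖s‖ ^ 2 : ℝ) : ℍ[ℝ]) ≠ 0 := by
  intro hP
  have hs : ‖s‖ * ‖s‖ = s.re ^ 2 + s.imI ^ 2 + s.imJ ^ 2 + s.imK ^ 2 := by
    rw [← Quaternion.normSq_eq_norm_mul_self]
    exact Quaternion.normSq_def' s
  have h2 : (2 : ℍ[ℝ]) = ((2 : ℝ) : ℍ[ℝ]) := rfl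
  rw [h2] at hP
  have hI := congrArg QuaternionAlgebra.imI hP
  have hJ := congrArg QuaternionAlgebra.imJ hP
  have hK := congrArg QuaternionAlgebra.imK hP
  have hR := congrArg QuaternionAlgebra.re hP
  simp [pow_two, Quaternion.re_mul, Quaternion.imI_mul, Quaternion.imJ_mul,
    Quaternion.imK_mul] at hI hJ hK hR
  have hI0 : x.imI = 0 := by nlinarith [hI]
  have hJ0 : x.imJ = 0 := by nlinarith [hJ]
  have hK0 : x.imK = 0 := by nlinarith [hK]
  rw [hI0, hJ0, hK0] at hR
  rw [hs] at hR
  nlinarith [hR, h, sq_nonneg (x.re - s.re), sq_nonneg s.imI, sq_nonneg s.imJ, sq_nonneg s.imK]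

theorem solveI (s x I : ℍ[ℝ]) (h : x.re < s.re) (hI : s * I - I * x = 1) : I = SR s x := by
  set c : ℍ[ℝ] := ((s.re : ℝ) : ℍ[ℝ]) with hc
  set n : ℍ[ℝ] := ((‖s‖ ^ 2 : ℝ) : ℍ[ℝ]) with hn
  have hP : x ^ 2 - 2 * c * x + n ≠ 0 := Pne s x h
  have hIc : I * c = c * I := (Quaternion.coe_commutes _ _).symm
  have hIn : I * n = n * I := (Quaternion.coe_commutes _ _).symm
  have hqs0 : s * s - 2 * c * s + n = 0 := by
    have := quadSelf s; rwa [pow_two] at this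
  have hx : I * x = s * I - 1 := by rw [← hI]; noncomm_ring
  have key : I * (x ^ 2 - 2 * c * x + n) = (2 * c - s) - x := by
    have e1 : I * (x ^ 2 - 2 * c * x + n) = (I * x) * x - 2 * ((I * c) * x) + I * n := by
      noncomm_ring
    rw [e1, hIc, hIn, hx]
    have e2 : (s * I - 1) * x - 2 * ((c * I) * x) + n * I
        = s * (I * x) - x - 2 * (c * (I * x)) + n * I := by noncomm_ring
    rw [e2, hx]
    have e3 : s * (s * I - 1) - x - 2 * (c * (s * I - 1)) + n * I
        = (s * s - 2 * c * s + n) * I - s - x + 2 * c := by noncomm_ring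
    rw [e3, hqs0]
    noncomm_ring
  have hstar : star s = 2 * c - s := by
    rw [Quaternion.star_eq_two_re_sub, Quaternion.coe_mul]
    have h2 : ((2 : ℝ) : ℍ[ℝ]) = 2 := rfl
    rw [h2]
  have hI2 : I = ((2 * c - s) - x) * (x ^ 2 - 2 * c * x + n)⁻¹ :=
    (eq_mul_inv_iff_mul_eq₀ hP).2 key
  rw [hI2, SR, hstar, ← neg_mul, neg_sub, ← hc, ← hn]

theorem stmt1 (s x : ℍ[ℝ]) (h : x.re < s.re) :
    IntegrableOn
      (fun t : ℝ => NormedSpace.exp (-(t • s)) * NormedSpace.exp (t • x))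
      (Set.Ioi 0) volume ∧
    ∫ t in Set.Ioi (0 : ℝ),
      NormedSpace.exp (-(t • s)) * NormedSpace.exp (t • x) = SR s x := by
  set b : ℝ := s.re - x.re with hb
  have hb0 : 0 < b := sub_pos.2 h
  set f : ℝ → ℍ[ℝ] := fun t => NormedSpace.exp (-(t • s)) * NormedSpace.exp (t • x) with hf
  have hnorm : ∀ t : ℝ, ‖f t‖ = Real.exp (-(b * t)) := by
    intro t
    have h1 : ‖NormedSpace.exp (-(t • s))‖ = Real.exp (-(t * s.re)) := by
      rw [Quaternion.norm_exp]
      have : (-(t • s)).re = -(t * s.re) := by simp [Quaternion.re_smul]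
      rw [this, ← Real.exp_eq_exp_ℝ, Real.norm_eq_abs, abs_of_pos (Real.exp_pos _)]
    have h2 : ‖NormedSpace.exp (t • x)‖ = Real.exp (t * x.re) := by
      rw [Quaternion.norm_exp]
      have : (t • x).re = t * x.re := by simp [Quaternion.re_smul]
      rw [this, ← Real.exp_eq_exp_ℝ, Real.norm_eq_abs, abs_of_pos (Real.exp_pos _)]
    rw [hf]; simp only [norm_mul, h1, h2, ← Real.exp_add]
    rw [hb]; ring_nf
  have hcont : Continuous f := by
    apply Continuous.mul
    · exact (continuous_iff_continuousAt.2 fun y => (NormedSpace.exp_analytic (𝕂 := ℝ) y).continuousAt).comp (by continuity)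
    · exact (continuous_iff_continuousAt.2 fun y => (NormedSpace.exp_analytic (𝕂 := ℝ) y).continuousAt).comp (by continuity)
  have hint : IntegrableOn f (Set.Ioi 0) volume := by
    refine (exp_neg_integrableOn_Ioi 0 hb0).mono' hcont.aestronglyMeasurable.restrict ?_
    filter_upwards with t
    rw [hnorm t, neg_mul]
  set L : ℍ[ℝ] →L[ℝ] ℍ[ℝ] :=
    ContinuousLinearMap.mul ℝ ℍ[ℝ] (-s) + (ContinuousLinearMap.mul ℝ ℍ[ℝ]).flip x with hL
  have hLapp : ∀ v : ℍ[ℝ], L v = -s * v + v * x := by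
    intro v
    simp [hL, ContinuousLinearMap.add_apply, ContinuousLinearMap.mul_apply',
      ContinuousLinearMap.flip_apply]
  have hderiv : ∀ t : ℝ, HasDerivAt f (L (f t)) t := by
    intro t
    have hg : HasDerivAt (fun u : ℝ => NormedSpace.exp (-(u • s)))
        ((-s) * NormedSpace.exp (-(t • s))) t := by
      have := hasDerivAt_exp_smul_const' (-s) t
      simpa [smul_neg] using this
    have hh : HasDerivAt (fun u : ℝ => NormedSpace.exp (u • x))
        (NormedSpace.exp (t • x) * x) t := hasDerivAt_exp_smul_const x t
    have hmul := hg.mul hh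
    convert hmul using 1
    · rfl
    · rfl
    rw [hLapp, hf]
    noncomm_ring
  have htend : Filter.Tendsto f Filter.atTop (nhds 0) := by
    apply squeeze_zero_norm (fun t => (hnorm t).le)
    have h1 : Filter.Tendsto (fun t : ℝ => b * t) Filter.atTop Filter.atTop :=
      Filter.Tendsto.const_mul_atTop hb0 Filter.tendsto_id
    exact Real.tendsto_exp_neg_atTop_nhds_zero.comp h1
  have hf0 : f 0 = 1 := by
    simp [hf, NormedSpace.exp_zero]
  have hdint : IntegrableOn (fun t => L (f t)) (Set.Ioi 0) volume :=
    L.integrable_comp hint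
  have hFTC : ∫ t in Set.Ioi (0:ℝ), L (f t) = 0 - f 0 :=
    integral_Ioi_of_hasDerivAt_of_tendsto hcont.continuousWithinAt
      (fun t _ => hderiv t) hdint htend
  rw [ContinuousLinearMap.integral_comp_comm L hint, hf0] at hFTC
  set I : ℍ[ℝ] := ∫ t in Set.Ioi (0:ℝ), f t with hIdef
  rw [hLapp] at hFTC
  have hSyl : s * I - I * x = 1 := by
    have h1 : -(s * I - I * x) = -s * I + I * x := by noncomm_ring
    rw [← neg_neg (s * I - I * x), h1, hFTC]
    norm_num
  exact ⟨hint, solveI s x I h hSyl⟩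
end
end

section
/- For quaternions s, x with Re(s) < Re(x), one has S_R^{-1}(s,x) = -∫_{-∞}^0 e^{-st} e^{xt} dt. -/
open scoped Quaternion
open MeasureTheory

noncomputable section

open NormedSpace in
private lemma quat_deriv_aux (e1 e2 A s x : ℍ[ℝ]) (hc1 : e1 * s = s * e1)
    (hc2 : e2 * x = x * e2) (key : A * x - s * A = 1) :
    (-s) * e1 * (A * e2) + e1 * (A * (e2 * x)) = e1 * e2 := by
  have h1 : (-s) * e1 = e1 * (-s) := by rw [neg_mul, ← hc1, ← mul_neg]
  have h2 : A * (e2 * x) = (A * x) * e2 := by rw [hc2, ← mul_assoc]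
  have h3 : e1 * e2 = e1 * ((A * x - s * A) * e2) := by rw [key, one_mul]
  rw [h1, h2, h3]
  noncomm_ring

set_option maxHeartbeats 1000000

open NormedSpace

theorem stmt2 (s x : ℍ[ℝ]) (h : s.re < x.re) :
    SR s x =
      -∫ t in Set.Iic (0 : ℝ),
        NormedSpace.exp (-(t • s)) * NormedSpace.exp (t • x) := by
  set P : ℍ[ℝ] := x ^ 2 - 2 * (s.re : ℍ[ℝ]) * x + ((‖s‖ ^ 2 : ℝ) : ℍ[ℝ]) with hPdef
  have hns : (‖s‖ ^ 2 : ℝ) = s.re ^ 2 + s.imI ^ 2 + s.imJ ^ 2 + s.imK ^ 2 := by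
    rw [pow_two, ← Quaternion.normSq_eq_norm_mul_self, Quaternion.normSq_def']
  have hcast : (2 : ℍ[ℝ]) * ((s.re : ℝ) : ℍ[ℝ]) = (((2 * s.re : ℝ)) : ℍ[ℝ]) := by
    ext <;> simp [two_mul]
  have hP0 : P ≠ 0 := by
    intro hc
    rw [hPdef, hcast, Quaternion.ext_iff] at hc
    obtain ⟨h1, h2, h3, h4⟩ := hc
    simp only [Quaternion.re_sub, Quaternion.re_add, Quaternion.re_mul, Quaternion.imI_mul,
      Quaternion.imI_sub, Quaternion.imI_add, Quaternion.re_coe, Quaternion.imI_coe,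
      Quaternion.re_zero, Quaternion.imI_zero, pow_two, Quaternion.imJ_mul, Quaternion.imK_mul,
      Quaternion.imJ_sub, Quaternion.imJ_add, Quaternion.imJ_coe, Quaternion.imJ_zero,
      Quaternion.imK_sub, Quaternion.imK_add, Quaternion.imK_coe, Quaternion.imK_zero] at h1 h2 h3 h4
    have hI : x.imI = 0 := by nlinarith [sq_nonneg (x.re - s.re)]
    have hJ : x.imJ = 0 := by nlinarith [sq_nonneg (x.re - s.re)]
    have hK : x.imK = 0 := by nlinarith [sq_nonneg (x.re - s.re)]
    rw [hI, hJ, hK] at h1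
    nlinarith [sq_nonneg (x.re - s.re), sq_nonneg s.imI, sq_nonneg s.imJ, sq_nonneg s.imK]
  set A : ℍ[ℝ] := (x - star s) * P⁻¹ with hAdef
  have hPx : Commute P x := by
    rw [hPdef, hcast]
    exact (((Commute.refl x).pow_left 2).sub_left
      ((Quaternion.coe_commute _ x).mul_left (Commute.refl x))).add_left
      (Quaternion.coe_commute _ x)
  have hPinvx : Commute P⁻¹ x := hPx.inv_left₀
  have key : A * x - s * A = 1 := by
    have h1 : A * x = ((x - star s) * x) * P⁻¹ := by
      rw [hAdef, mul_assoc, hPinvx.eq, ← mul_assoc]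
    have h2 : (x - star s) * x - s * (x - star s) = P := by
      have hss : s * star s = ((‖s‖ ^ 2 : ℝ) : ℍ[ℝ]) := by
        rw [Quaternion.self_mul_star, pow_two, ← Quaternion.normSq_eq_norm_mul_self]
      have hadd : s + star s = ((2 * s.re : ℝ) : ℍ[ℝ]) := Quaternion.self_add_star' s
      have expand : (x - star s) * x - s * (x - star s)
          = x ^ 2 - (s + star s) * x + s * star s := by noncomm_ring
      rw [expand, hadd, hss, hPdef, hcast]
    rw [h1, hAdef, ← mul_assoc s, ← sub_mul, h2, mul_inv_cancel₀ hP0]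
  -- the antiderivative
  set F : ℝ → ℍ[ℝ] := fun t => exp (t • (-s)) * (A * exp (t • x)) with hFdef
  have hderiv : ∀ t : ℝ, HasDerivAt F (exp (-(t • s)) * exp (t • x)) t := by
    intro t
    have d1 : HasDerivAt (fun u : ℝ => exp (u • (-s))) ((-s) * exp (t • (-s))) t :=
      hasDerivAt_exp_smul_const' (-s) t
    have d2 : HasDerivAt (fun u : ℝ => exp (u • x)) (exp (t • x) * x) t :=
      hasDerivAt_exp_smul_const x t
    have d2' : HasDerivAt (fun u : ℝ => A * exp (u • x)) (A * (exp (t • x) * x)) t :=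
      d2.const_mul A
    have dF := d1.mul d2'
    have hc1 : exp (t • (-s)) * s = s * exp (t • (-s)) := by
      have hco : Commute (t • (-s)) s := ((Commute.refl s).neg_left).smul_left t
      exact (hco.exp_left).eq
    have hc2 : exp (t • x) * x = x * exp (t • x) := by
      have hco : Commute (t • x) x := (Commute.refl x).smul_left t
      exact (hco.exp_left).eq
    have hval : (-s) * exp (t • (-s)) * (A * exp (t • x))
        + exp (t • (-s)) * (A * (exp (t • x) * x))
        = exp (-(t • s)) * exp (t • x) := by
      rw [show -(t • s) = t • (-s) by rw [smul_neg]]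
      exact quat_deriv_aux _ _ A s x hc1 hc2 key
    exact hval ▸ dF
  -- norm of integrand
  set c : ℝ := x.re - s.re with hcdef
  have hc : 0 < c := sub_pos.mpr h
  have hnorm : ∀ t : ℝ, ‖exp (-(t • s)) * exp (t • x)‖ ≤ Real.exp (c * t) := by
    intro t
    calc ‖exp (-(t • s)) * exp (t • x)‖
        ≤ ‖exp (-(t • s))‖ * ‖exp (t • x)‖ := norm_mul_le _ _
      _ = Real.exp ((-(t • s)).re) * Real.exp ((t • x).re) := by
          rw [Quaternion.norm_exp, Quaternion.norm_exp, ← Real.exp_eq_exp_ℝ,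
            Real.norm_eq_abs, Real.norm_eq_abs, abs_of_pos (Real.exp_pos _),
            abs_of_pos (Real.exp_pos _)]
      _ = Real.exp (c * t) := by
          rw [← Real.exp_add]
          congr 1
          simp only [Quaternion.re_smul, Quaternion.re_neg, hcdef, smul_eq_mul]
          ring
  have hgint : IntegrableOn (fun t : ℝ => Real.exp (c * t)) (Set.Iic (0:ℝ)) := by
    have h0 : Integrable ((Set.Iic (0:ℝ)).indicator Real.exp) := by
      rw [← integrableOn_iff_integrable_of_support_subset Set.support_indicator_subset]
      exact (integrableOn_exp_Iic 0).congr_fun_ae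
        (Filter.EventuallyEq.symm (ae_restrict_of_forall_mem measurableSet_Iic
          (fun t ht => Set.indicator_of_mem ht Real.exp)))
    have h1 : Integrable (fun t : ℝ => ((Set.Iic (0:ℝ)).indicator Real.exp) (c * t)) :=
      (MeasureTheory.integrable_comp_mul_left_iff _ hc.ne').mpr h0
    have h2 : (fun t : ℝ => ((Set.Iic (0:ℝ)).indicator Real.exp) (c * t))
        = (Set.Iic (0:ℝ)).indicator (fun t => Real.exp (c * t)) := by
      ext t
      by_cases ht : t ≤ 0
      · rw [Set.indicator_of_mem (Set.mem_Iic.2 ht),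
          Set.indicator_of_mem (Set.mem_Iic.2 (mul_nonpos_of_nonneg_of_nonpos hc.le ht))]
      · push_neg at ht
        rw [Set.indicator_of_notMem, Set.indicator_of_notMem]
        · exact fun hh => absurd (Set.mem_Iic.1 hh) (not_le.2 ht)
        · exact fun hh => absurd (Set.mem_Iic.1 hh) (not_le.2 (mul_pos hc ht))
    rw [h2] at h1
    exact (integrable_indicator_iff measurableSet_Iic).mp h1
  have hcont : Continuous fun t : ℝ => exp (-(t • s)) * exp (t • x) := by
    have he : Continuous (exp : ℍ[ℝ] → ℍ[ℝ]) := continuous_iff_continuousAt.2 fun y => (exp_analytic (𝕂 := ℝ) y).continuousAt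
    exact ((he.comp ((continuous_id.smul continuous_const).neg))).mul
      (he.comp (continuous_id.smul continuous_const))
  have hint : IntegrableOn (fun t : ℝ => exp (-(t • s)) * exp (t • x)) (Set.Iic (0:ℝ)) :=
    Integrable.mono' hgint (hcont.aestronglyMeasurable.restrict)
      (ae_restrict_of_forall_mem measurableSet_Iic fun t _ => hnorm t)
  have hb : ∀ t : ℝ, ‖F t‖ ≤ ‖A‖ * Real.exp (c * t) := by
    intro t
    have e1n : ‖exp (t • (-s))‖ = Real.exp ((t • (-s) : ℍ[ℝ]).re) := by
      rw [Quaternion.norm_exp, ← Real.exp_eq_exp_ℝ, Real.norm_eq_abs,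
        abs_of_pos (Real.exp_pos _)]
    have e2n : ‖exp (t • x)‖ = Real.exp ((t • x : ℍ[ℝ]).re) := by
      rw [Quaternion.norm_exp, ← Real.exp_eq_exp_ℝ, Real.norm_eq_abs,
        abs_of_pos (Real.exp_pos _)]
    calc ‖F t‖ ≤ ‖exp (t • (-s))‖ * (‖A‖ * ‖exp (t • x)‖) := by
          refine (norm_mul_le _ _).trans ?_
          gcongr
          exact norm_mul_le _ _
      _ = ‖A‖ * Real.exp (c * t) := by
          rw [e1n, e2n, ← mul_assoc, mul_comm (Real.exp _) ‖A‖, mul_assoc, ← Real.exp_add]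
          congr 2
          simp only [Quaternion.re_smul, Quaternion.re_neg, hcdef, smul_eq_mul]
          ring
  have htend : Filter.Tendsto F Filter.atBot (nhds 0) := by
    refine squeeze_zero_norm hb ?_
    rw [show (0:ℝ) = ‖A‖ * 0 by ring]
    refine Filter.Tendsto.const_mul _ (Real.tendsto_exp_atBot.comp ?_)
    exact Filter.tendsto_id.const_mul_atBot hc
  have heq : ∫ t in Set.Iic (0:ℝ), exp (-(t • s)) * exp (t • x) = F 0 - 0 :=
    integral_Iic_of_hasDerivAt_of_tendsto' (fun t _ => hderiv t) hint htend
  rw [heq]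
  simp only [hFdef, zero_smul, exp_zero, one_mul, mul_one, sub_zero]
  rw [SR, hAdef]
end
end

section
/- Every quaternionic measure μ on (Ω, 𝒜) admits a polar decomposition: there exists a measurable function h : Ω → ℍ with |h(x)| = 1 for all x ∈ Ω such that μ(A) = ∫_A h d|μ| for all A ∈ 𝒜. -/
open scoped Quaternion ENNReal
open MeasureTheory

open scoped NNReal

noncomputable section

variable {Ω : Type*} [MeasurableSpace Ω]

instance (s : SignedMeasure Ω) : IsFiniteMeasure s.totalVariation := by
  rw [SignedMeasure.totalVariation]; infer_instance

def qC : Fin 4 → (ℍ[ℝ] →L[ℝ] ℝ)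
  | 0 => ⟨QuaternionAlgebra.reₗ _ _ _, Quaternion.continuous_re⟩
  | 1 => ⟨QuaternionAlgebra.imIₗ _ _ _, Quaternion.continuous_imI⟩
  | 2 => ⟨QuaternionAlgebra.imJₗ _ _ _, Quaternion.continuous_imJ⟩
  | 3 => ⟨QuaternionAlgebra.imKₗ _ _ _, Quaternion.continuous_imK⟩

def qsm (μ : VectorMeasure Ω ℍ[ℝ]) (i : Fin 4) : SignedMeasure Ω :=
  μ.mapRange (qC i).toLinearMap.toAddMonoidHom (qC i).continuous

def qdom (μ : VectorMeasure Ω ℍ[ℝ]) : Measure Ω :=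
  (qsm μ 0).totalVariation + (qsm μ 1).totalVariation + (qsm μ 2).totalVariation
    + (qsm μ 3).totalVariation

instance (μ : VectorMeasure Ω ℍ[ℝ]) : IsFiniteMeasure (qdom μ) := by
  rw [qdom]; infer_instance

lemma qsm_ac (μ : VectorMeasure Ω ℍ[ℝ]) (i : Fin 4) :
    qsm μ i ≪ᵥ (qdom μ).toENNRealVectorMeasure := by
  refine VectorMeasure.AbsolutelyContinuous.mk fun A hA h0 => ?_
  rw [Measure.toENNRealVectorMeasure_apply_measurable hA] at h0
  have : (qsm μ i).totalVariation A = 0 := by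
    have hle : (qsm μ i).totalVariation A ≤ qdom μ A := by
      fin_cases i <;>
        simp only [qdom, Measure.add_apply] <;>
        [skip; skip; skip; skip] <;>
        first
          | exact le_add_of_le_of_nonneg (le_add_of_le_of_nonneg
              (le_add_of_le_of_nonneg le_rfl (zero_le)) (zero_le)) (zero_le)
          | exact le_add_of_le_of_nonneg (le_add_of_le_of_nonneg
              (le_add_of_nonneg_of_le (zero_le) le_rfl) (zero_le)) (zero_le)
          | exact le_add_of_le_of_nonneg (le_add_of_nonneg_of_le (zero_le) le_rfl) (zero_le)
          | exact le_add_of_nonneg_of_le (zero_le) le_rfl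
    exact le_antisymm (h0 ▸ hle) (zero_le)
  exact SignedMeasure.null_of_totalVariation_zero _ this

def qi : ℍ[ℝ] := ⟨0,1,0,0⟩
def qj : ℍ[ℝ] := ⟨0,0,1,0⟩
def qk : ℍ[ℝ] := ⟨0,0,0,1⟩

def qdens (μ : VectorMeasure Ω ℍ[ℝ]) : Ω → ℍ[ℝ] := fun x =>
  (qsm μ 0).rnDeriv (qdom μ) x • (1 : ℍ[ℝ]) +
  (qsm μ 1).rnDeriv (qdom μ) x • qi +
  (qsm μ 2).rnDeriv (qdom μ) x • qj +
  (qsm μ 3).rnDeriv (qdom μ) x • qk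

lemma qdens_integrable (μ : VectorMeasure Ω ℍ[ℝ]) : Integrable (qdens μ) (qdom μ) := by
  exact ((((SignedMeasure.integrable_rnDeriv _ _).smul_const _).add
    ((SignedMeasure.integrable_rnDeriv _ _).smul_const _)).add
    ((SignedMeasure.integrable_rnDeriv _ _).smul_const _)).add
    ((SignedMeasure.integrable_rnDeriv _ _).smul_const _)

lemma qdens_sm (μ : VectorMeasure Ω ℍ[ℝ]) : StronglyMeasurable (qdens μ) := by
  exact (((((SignedMeasure.measurable_rnDeriv _ _).stronglyMeasurable.smul_const _).add
    ((SignedMeasure.measurable_rnDeriv _ _).stronglyMeasurable.smul_const _)).add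
    ((SignedMeasure.measurable_rnDeriv _ _).stronglyMeasurable.smul_const _)).add
    ((SignedMeasure.measurable_rnDeriv _ _).stronglyMeasurable.smul_const _))

lemma qC_zero (q : ℍ[ℝ]) : qC 0 q = q.re := rfl
lemma qC_one (q : ℍ[ℝ]) : qC 1 q = q.imI := rfl
lemma qC_two (q : ℍ[ℝ]) : qC 2 q = q.imJ := rfl
lemma qC_three (q : ℍ[ℝ]) : qC 3 q = q.imK := rfl
lemma qi_parts : qi.re = 0 ∧ qi.imI = 1 ∧ qi.imJ = 0 ∧ qi.imK = 0 := ⟨rfl, rfl, rfl, rfl⟩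
lemma qj_parts : qj.re = 0 ∧ qj.imI = 0 ∧ qj.imJ = 1 ∧ qj.imK = 0 := ⟨rfl, rfl, rfl, rfl⟩
lemma qk_parts : qk.re = 0 ∧ qk.imI = 0 ∧ qk.imJ = 0 ∧ qk.imK = 1 := ⟨rfl, rfl, rfl, rfl⟩

lemma qC_qdens (μ : VectorMeasure Ω ℍ[ℝ]) (i : Fin 4) (x : Ω) :
    qC i (qdens μ x) = (qsm μ i).rnDeriv (qdom μ) x := by
  fin_cases i <;>
    simp [qC_zero, qC_one, qC_two, qC_three, qdens, QuaternionAlgebra.reₗ, QuaternionAlgebra.imIₗ, QuaternionAlgebra.imJₗ,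
      QuaternionAlgebra.imKₗ, qi_parts, qj_parts, qk_parts]

section X
variable (μ : VectorMeasure Ω ℍ[ℝ])
variable {Ω : Type*} [MeasurableSpace Ω]
variable (μ : VectorMeasure Ω ℍ[ℝ])


lemma qsm_setIntegral {A : Set Ω} (hA : MeasurableSet A) (i : Fin 4) :
    ∫ x in A, (qsm μ i).rnDeriv (qdom μ) x ∂(qdom μ) = qsm μ i A := by
  conv_rhs => rw [← SignedMeasure.withDensityᵥ_rnDeriv_eq (qsm μ i) (qdom μ) (qsm_ac μ i)]
  rw [withDensityᵥ_apply (SignedMeasure.integrable_rnDeriv _ _) hA]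

lemma qrep {A : Set Ω} (hA : MeasurableSet A) :
    μ A = ∫ x in A, qdens μ x ∂(qdom μ) := by
  have key : ∀ i : Fin 4, qC i (μ A) = qC i (∫ x in A, qdens μ x ∂(qdom μ)) := by
    intro i
    rw [← ContinuousLinearMap.integral_comp_comm (qC i) ((qdens_integrable μ).restrict)]
    have h1 : qC i (μ A) = qsm μ i A := by
      rw [qsm]; rfl
    have h2 : ∫ x in A, qC i (qdens μ x) ∂(qdom μ)
        = ∫ x in A, (qsm μ i).rnDeriv (qdom μ) x ∂(qdom μ) := by
      exact integral_congr_ae (Filter.Eventually.of_forall fun x => qC_qdens μ i x)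
    rw [h1, h2, qsm_setIntegral μ hA]
  ext1
  · exact key 0
  · exact key 1
  · exact key 2
  · exact key 3
end X

/-- The total variation of a quaternionic (vector) measure. -/
def qvar (μ : VectorMeasure Ω ℍ[ℝ]) (A : Set Ω) : ℝ≥0∞ :=
  ⨆ (π : ℕ → Set Ω) (_ : ∀ i, MeasurableSet (π i))
    (_ : Pairwise (Function.onFun Disjoint π)) (_ : (⋃ i, π i) = A),
    ∑' i, (‖μ (π i)‖₊ : ℝ≥0∞)

section Y
variable (μ : VectorMeasure Ω ℍ[ℝ])

lemma qvar_le_lintegral {A : Set Ω} (_hA : MeasurableSet A) :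
    qvar μ A ≤ ∫⁻ x in A, ‖qdens μ x‖₊ ∂(qdom μ) := by
  rw [qvar]
  refine iSup_le fun π => iSup_le fun hm => iSup_le fun hd => iSup_le fun hu => ?_
  subst hu
  rw [lintegral_iUnion hm hd]
  refine ENNReal.tsum_le_tsum fun i => ?_
  rw [qrep μ (hm i)]
  exact enorm_integral_le_lintegral_enorm _

lemma finpart_le_qvar {A : Set Ω} {n : ℕ} (C : Fin n → Set Ω)
    (hm : ∀ i, MeasurableSet (C i)) (hd : Pairwise (Function.onFun Disjoint C))
    (hu : (⋃ i, C i) = A) :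
    ∑ i : Fin n, (‖μ (C i)‖₊ : ℝ≥0∞) ≤ qvar μ A := by
  classical
  set π : ℕ → Set Ω := fun i => if h : i < n then C ⟨i, h⟩ else ∅ with hπ
  have hm' : ∀ i, MeasurableSet (π i) := by
    intro i; rw [hπ]; dsimp only; split
    · exact hm _
    · exact MeasurableSet.empty
  have hd' : Pairwise (Function.onFun Disjoint π) := by
    intro i j hij
    rw [Function.onFun, hπ]; dsimp only
    split
    · split
      · exact hd (by simpa using fun h => hij (by omega))
      · exact disjoint_bot_right
    · exact disjoint_bot_left
  have hu' : (⋃ i, π i) = A := by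
    rw [← hu]
    apply Set.Subset.antisymm
    · refine Set.iUnion_subset fun i => ?_
      rw [hπ]; dsimp only; split
      · exact Set.subset_iUnion _ _
      · exact Set.empty_subset _
    · refine Set.iUnion_subset fun i => ?_
      refine Set.subset_iUnion_of_subset (i : ℕ) ?_
      rw [hπ]; dsimp only; rw [dif_pos i.isLt]
  have hsum : ∑' i, (‖μ (π i)‖₊ : ℝ≥0∞) = ∑ i : Fin n, (‖μ (C i)‖₊ : ℝ≥0∞) := by
    rw [tsum_eq_sum (s := Finset.range n) (fun i hi => by
      rw [hπ]; dsimp only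
      rw [dif_neg (by simpa using hi)]
      simp)]
    rw [Finset.sum_range fun i => (‖μ (π i)‖₊ : ℝ≥0∞)]
    refine Finset.sum_congr rfl fun i _ => ?_
    rw [hπ]; dsimp only; rw [dif_pos i.isLt]
  rw [qvar, ← hsum]
  exact le_iSup_of_le π (le_iSup_of_le hm' (le_iSup_of_le hd' (le_iSup_of_le hu' le_rfl)))
end Y

section Z
variable (μ : VectorMeasure Ω ℍ[ℝ])

lemma lintegral_le_qvar {A : Set Ω} (hA : MeasurableSet A) :
    ∫⁻ x in A, ‖qdens μ x‖₊ ∂(qdom μ) ≤ qvar μ A := by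
  classical
  refine ENNReal.le_of_forall_pos_le_add fun ε hε _ => ?_
  set ν₀ := qdom μ with hν₀
  set g := qdens μ with hg
  have hgi : Integrable g ν₀ := qdens_integrable μ
  have hg1 : MemLp g 1 ν₀ := memLp_one_iff_integrable.mpr hgi
  have hε2 : ((ε : ℝ≥0∞)/2 : ℝ≥0∞) ≠ 0 := by
    simp [ENNReal.div_eq_zero_iff, hε.ne']
  obtain ⟨s, hs, hsl⟩ := hg1.exists_simpleFunc_eLpNorm_sub_lt (by norm_num) hε2
  rw [eLpNorm_one_eq_lintegral_enorm] at hs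
  simp only [Pi.sub_apply] at hs
  have hsi : Integrable s ν₀ := memLp_one_iff_integrable.mp hsl
  set B : ℍ[ℝ] → Set Ω := fun t => A ∩ s ⁻¹' {t} with hB
  have hBm : ∀ t, MeasurableSet (B t) := fun t => hA.inter (s.measurableSet_preimage _)
  have hBd : ∀ t t', t ≠ t' → Disjoint (B t) (B t') := by
    intro t t' h
    rw [Set.disjoint_left]
    rintro x ⟨-, hx⟩ ⟨-, hx'⟩
    exact h ((Set.mem_singleton_iff.mp hx).symm.trans (Set.mem_singleton_iff.mp hx'))
  have hAeq : A = ⋃ t ∈ s.range, B t := by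
    apply Set.Subset.antisymm
    · intro x hx
      refine Set.mem_biUnion (s.mem_range_self x) ⟨hx, rfl⟩
    · intro x hx
      simp only [Set.mem_iUnion] at hx
      obtain ⟨t, _, hxA, -⟩ := hx
      exact hxA
  -- the sum over the partition by `s`-level sets is at most qvar
  have hpart : ∑ t ∈ s.range, (‖μ (B t)‖₊ : ℝ≥0∞) ≤ qvar μ A := by
    set e := Fintype.equivFin ↥(s.range) with he
    set C : Fin (Fintype.card ↥(s.range)) → Set Ω := fun i => B (e.symm i) with hC
    have hsum : ∑ i : Fin (Fintype.card ↥(s.range)), (‖μ (C i)‖₊ : ℝ≥0∞)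
        = ∑ t ∈ s.range, (‖μ (B t)‖₊ : ℝ≥0∞) := by
      rw [← Finset.sum_coe_sort s.range (fun t => (‖μ (B t)‖₊ : ℝ≥0∞))]
      exact Fintype.sum_equiv e.symm _ _ fun i => rfl
    rw [← hsum]
    refine finpart_le_qvar μ C (fun i => hBm _) ?_ ?_
    · intro i j hij
      exact hBd _ _ (fun h => hij (e.symm.injective (Subtype.val_injective h)))
    · apply Set.Subset.antisymm
      · refine Set.iUnion_subset fun i => ?_
        intro x hx
        rw [hAeq]
        exact Set.mem_biUnion (e.symm i).2 (show x ∈ B ↑(e.symm i) from hx)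
      · rw [hAeq]
        intro x hx
        simp only [Set.mem_iUnion] at hx ⊢
        obtain ⟨t, ht, hxt⟩ := hx
        exact ⟨e ⟨t, ht⟩, by simpa [hC] using hxt⟩
  -- main calculation
  have hsub : ∀ {D : Set Ω}, MeasurableSet D →
      (‖∫ x in D, s x ∂ν₀‖₊ : ℝ≥0∞) ≤ ‖μ D‖₊ + ∫⁻ x in D, ‖g x - s x‖₊ ∂ν₀ := by
    intro D hD
    have h1 : ∫ x in D, s x ∂ν₀ = (∫ x in D, g x ∂ν₀) + ∫ x in D, (s x - g x) ∂ν₀ := by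
      have := integral_add (hgi.restrict (s := D)) (hsi.restrict.sub hgi.restrict)
      simpa using this
    rw [h1, ← qrep μ hD]
    calc (‖μ D + ∫ x in D, (s x - g x) ∂ν₀‖₊ : ℝ≥0∞)
        ≤ (‖μ D‖₊ : ℝ≥0∞) + (‖∫ x in D, (s x - g x) ∂ν₀‖₊ : ℝ≥0∞) := by
          exact_mod_cast nnnorm_add_le _ _
      _ ≤ _ := ?_
    refine add_le_add_right ?_ _
    refine le_trans (enorm_integral_le_lintegral_enorm _) ?_
    refine le_of_eq (lintegral_congr fun x => ?_)
    rw [← nnnorm_neg, neg_sub]; rfl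
  calc ∫⁻ x in A, ‖g x‖₊ ∂ν₀
      ≤ ∫⁻ x in A, ((‖s x‖₊ : ℝ≥0∞) + ‖g x - s x‖₊) ∂ν₀ := by
        refine lintegral_mono fun x => ?_
        have : ‖g x‖₊ ≤ ‖s x‖₊ + ‖g x - s x‖₊ := by
          have h := nnnorm_add_le (s x) (g x - s x)
          simpa [add_sub_cancel] using h
        exact le_trans (ENNReal.coe_le_coe.mpr this) (le_of_eq (ENNReal.coe_add _ _))
    _ = (∫⁻ x in A, ‖s x‖₊ ∂ν₀) + ∫⁻ x in A, ‖g x - s x‖₊ ∂ν₀ :=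
        lintegral_add_left s.stronglyMeasurable.enorm _
    _ ≤ (∫⁻ x in A, ‖s x‖₊ ∂ν₀) + ε/2 := by
        refine add_le_add_right (le_trans ?_ hs.le) _
        exact lintegral_mono' Measure.restrict_le_self le_rfl
    _ = (∑ t ∈ s.range, ∫⁻ x in B t, ‖s x‖₊ ∂ν₀) + ε/2 := by
        conv_lhs => rw [hAeq]
        rw [lintegral_biUnion_finset (fun t _ t' _ h => hBd t t' h) (fun t _ => hBm t)]
    _ = (∑ t ∈ s.range, (‖∫ x in B t, s x ∂ν₀‖₊ : ℝ≥0∞)) + ε/2 := by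
        refine congrArg (· + _) (Finset.sum_congr rfl fun t _ => ?_)
        have h1 : ∫⁻ x in B t, ‖s x‖₊ ∂ν₀ = (‖t‖₊ : ℝ≥0∞) * ν₀ (B t) := by
          rw [setLIntegral_congr_fun (hBm t)
            (fun x hx => by
              rw [Set.mem_singleton_iff.mp hx.2]), setLIntegral_const]
        have h2 : ∫ x in B t, s x ∂ν₀ = (ν₀ (B t)).toReal • t := by
          rw [setIntegral_congr_fun (hBm t)
            (fun x hx => Set.mem_singleton_iff.mp hx.2), setIntegral_const, measureReal_def]
        rw [h1, h2, nnnorm_smul, ENNReal.coe_mul, ← enorm_eq_nnnorm, ← enorm_eq_nnnorm,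
          Real.enorm_eq_ofReal ENNReal.toReal_nonneg,
          ENNReal.ofReal_toReal (measure_ne_top _ _), mul_comm]
    _ ≤ (∑ t ∈ s.range, ((‖μ (B t)‖₊ : ℝ≥0∞) + ∫⁻ x in B t, ‖g x - s x‖₊ ∂ν₀)) + ε/2 :=
        add_le_add_left (Finset.sum_le_sum fun t _ => hsub (hBm t)) _
    _ = (∑ t ∈ s.range, (‖μ (B t)‖₊ : ℝ≥0∞))
          + (∑ t ∈ s.range, ∫⁻ x in B t, ‖g x - s x‖₊ ∂ν₀) + ε/2 := by
        rw [Finset.sum_add_distrib]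
    _ ≤ qvar μ A + ε/2 + ε/2 := by
        refine add_le_add_left (add_le_add hpart ?_) _
        rw [← lintegral_biUnion_finset (fun t _ t' _ h => hBd t t' h) (fun t _ => hBm t),
          ← hAeq]
        exact le_trans (lintegral_mono' Measure.restrict_le_self le_rfl) hs.le
    _ = qvar μ A + ε := by rw [add_assoc, ENNReal.add_halves]
end Z

section W
variable (μ : VectorMeasure Ω ℍ[ℝ])

theorem stmt7' (μ : VectorMeasure Ω ℍ[ℝ]) :
    ∃ (ν : Measure Ω) (h : Ω → ℍ[ℝ]),
      IsFiniteMeasure ν ∧ (∀ A : Set Ω, MeasurableSet A → ν A = qvar μ A) ∧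
      MeasureTheory.StronglyMeasurable h ∧ (∀ x, ‖h x‖ = 1) ∧
      (∀ A : Set Ω, MeasurableSet A → μ A = ∫ x in A, h x ∂ν) := by
  classical
  set g := qdens μ with hgdef
  have hgsm : StronglyMeasurable g := qdens_sm μ
  have hgi : Integrable g (qdom μ) := qdens_integrable μ
  set f : Ω → ℝ≥0 := fun x => ‖g x‖₊ with hfdef
  have hfm : Measurable f := hgsm.nnnorm.measurable
  set ν : Measure Ω := (qdom μ).withDensity (fun x => (f x : ℝ≥0∞)) with hν
  set h : Ω → ℍ[ℝ] := fun x => if g x = 0 then 1 else ‖g x‖⁻¹ • g x with hh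
  have hsm : StronglyMeasurable h := by
    refine StronglyMeasurable.ite ?_ stronglyMeasurable_const
      ((hgsm.norm.measurable.inv.stronglyMeasurable).smul hgsm)
    exact hgsm.measurableSet_eq_fun stronglyMeasurable_const
  have hnorm : ∀ x, ‖h x‖ = 1 := by
    intro x
    rw [hh]
    dsimp only
    split
    · exact norm_one
    · rename_i hx
      rw [norm_smul, norm_inv, norm_norm, inv_mul_cancel₀ (norm_ne_zero_iff.mpr hx)]
  have hfsmul : ∀ x, (f x : ℝ) • h x = g x := by
    intro x
    rw [hh, hfdef]
    dsimp only
    split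
    · rename_i hx; simp [hx]
    · rename_i hx
      rw [coe_nnnorm, smul_smul, mul_inv_cancel₀ (norm_ne_zero_iff.mpr hx), one_smul]
  refine ⟨ν, h, ?_, ?_, hsm, hnorm, ?_⟩
  · constructor
    rw [hν, withDensity_apply _ MeasurableSet.univ, Measure.restrict_univ]
    exact hgi.2
  · intro A hA
    rw [hν, withDensity_apply _ hA]
    exact le_antisymm (lintegral_le_qvar μ hA) (qvar_le_lintegral μ hA)
  · intro A hA
    rw [hν, restrict_withDensity hA,
      integral_withDensity_eq_integral_smul hfm h]
    rw [qrep μ hA]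
    refine integral_congr_ae (Filter.Eventually.of_forall fun x => ?_)
    show qdens μ x = f x • h x
    rw [NNReal.smul_def, hfsmul x]
end W

/-- Polar decomposition of a quaternionic measure: `μ = h d|μ|` with `|h| ≡ 1`. -/
theorem stmt7 (μ : VectorMeasure Ω ℍ[ℝ]) :
    ∃ (ν : Measure Ω) (h : Ω → ℍ[ℝ]),
      IsFiniteMeasure ν ∧ (∀ A : Set Ω, MeasurableSet A → ν A = qvar μ A) ∧
      MeasureTheory.StronglyMeasurable h ∧ (∀ x, ‖h x‖ = 1) ∧
      (∀ A : Set Ω, MeasurableSet A → μ A = ∫ x in A, h x ∂ν) := by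
  exact stmt7' μ
end
end

section
/- Let μ be a quaternionic measure on (Ω, 𝒜) and ν a quaternionic measure on (Υ, ℬ). Then there exists a unique quaternionic measure μ × ν on the product measurable space (Ω × Υ, 𝒜 ⊗ ℬ) satisfying (μ × ν)(A × B) = μ(A)·ν(B) for all A ∈ 𝒜 and B ∈ ℬ. -/
open scoped Quaternion
open MeasureTheory

noncomputable section

namespace Stmt8Aux

variable {Ω Υ : Type*} [MeasurableSpace Ω] [MeasurableSpace Υ]

/-- The product of two signed measures, built from Jordan decompositions. -/
def sprod (s : SignedMeasure Ω) (t : SignedMeasure Υ) : SignedMeasure (Ω × Υ) :=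
  (s.toJordanDecomposition.posPart.prod t.toJordanDecomposition.posPart).toSignedMeasure
  - (s.toJordanDecomposition.posPart.prod t.toJordanDecomposition.negPart).toSignedMeasure
  - (s.toJordanDecomposition.negPart.prod t.toJordanDecomposition.posPart).toSignedMeasure
  + (s.toJordanDecomposition.negPart.prod t.toJordanDecomposition.negPart).toSignedMeasure

lemma signed_apply (s : SignedMeasure Ω) {A : Set Ω} (hA : MeasurableSet A) :
    s A = (s.toJordanDecomposition.posPart A).toReal
        - (s.toJordanDecomposition.negPart A).toReal := by
  conv_lhs => rw [← s.toSignedMeasure_toJordanDecomposition]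
  rw [JordanDecomposition.toSignedMeasure, VectorMeasure.sub_apply,
    Measure.toSignedMeasure_apply_measurable hA, Measure.toSignedMeasure_apply_measurable hA]
  rfl

lemma sprod_apply (s : SignedMeasure Ω) (t : SignedMeasure Υ) {A : Set Ω} {B : Set Υ}
    (hA : MeasurableSet A) (hB : MeasurableSet B) :
    sprod s t (A ×ˢ B) = s A * t B := by
  have h : MeasurableSet (A ×ˢ B) := hA.prod hB
  have hne : ∀ (p : Measure Ω) (q : Measure Υ) [IsFiniteMeasure p] [IsFiniteMeasure q],
      (p.prod q).toSignedMeasure (A ×ˢ B) = (p A).toReal * (q B).toReal := by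
    intro p q _ _
    rw [Measure.toSignedMeasure_apply_measurable h, measureReal_def, Measure.prod_prod, ENNReal.toReal_mul]
  simp only [sprod, VectorMeasure.add_apply, VectorMeasure.sub_apply, hne,
    signed_apply s hA, signed_apply t hB]
  ring

/-- The quaternion basis. -/
def e : Fin 4 → ℍ[ℝ] := ![1, ⟨0, 1, 0, 0⟩, ⟨0, 0, 1, 0⟩, ⟨0, 0, 0, 1⟩]

/-- The coordinate additive homomorphisms. -/
def cHom : Fin 4 → (ℍ[ℝ] →+ ℝ) :=
  ![AddMonoidHom.mk' (fun q : ℍ[ℝ] => q.re) fun _ _ => rfl,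
    AddMonoidHom.mk' (fun q : ℍ[ℝ] => q.imI) fun _ _ => rfl,
    AddMonoidHom.mk' (fun q : ℍ[ℝ] => q.imJ) fun _ _ => rfl,
    AddMonoidHom.mk' (fun q : ℍ[ℝ] => q.imK) fun _ _ => rfl]

lemma cHom_cont : ∀ i, Continuous (cHom i) := by
  intro i
  fin_cases i <;>
    simp only [cHom, Fin.isValue, Matrix.cons_val_zero, Matrix.cons_val_one, Matrix.head_cons,
      Matrix.cons_val_two, Matrix.tail_cons, Matrix.cons_val_three, AddMonoidHom.mk',
      AddMonoidHom.coe_mk]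
  exacts [Quaternion.continuous_re, Quaternion.continuous_imI, Quaternion.continuous_imJ,
    Quaternion.continuous_imK]

/-- Scalar multiplication into a fixed quaternion, as an additive homomorphism. -/
def smulHom (q : ℍ[ℝ]) : ℝ →+ ℍ[ℝ] :=
  AddMonoidHom.mk' (· • q) fun a b => add_smul a b q

lemma smulHom_cont (q : ℍ[ℝ]) : Continuous (smulHom q) :=
  continuous_id.smul continuous_const

lemma quat_decomp (p q : ℍ[ℝ]) :
    ∑ i : Fin 4, ∑ j : Fin 4, (cHom i p * cHom j q) • (e i * e j) = p * q := by
  simp only [Fin.sum_univ_four, cHom, Matrix.cons_val_zero, Matrix.cons_val_one,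
    Matrix.head_cons, Matrix.cons_val_two, Matrix.tail_cons, Matrix.cons_val_three,
    AddMonoidHom.mk', AddMonoidHom.coe_mk, ZeroHom.coe_mk]
  simp only [DFunLike.coe]
  ext <;>
    simp [Quaternion.re_mul, Quaternion.imI_mul, Quaternion.imJ_mul, Quaternion.imK_mul] <;>
    simp [e] <;>
    ring

lemma vm_sum_apply {α M : Type*} [MeasurableSpace α] [AddCommMonoid M] [TopologicalSpace M]
    [T2Space M] [ContinuousAdd M] {ι : Type*} (S : Finset ι) (v : ι → VectorMeasure α M)
    (s : Set α) : (∑ i ∈ S, v i) s = ∑ i ∈ S, v i s := by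
  classical
  induction S using Finset.induction_on with
  | empty => simp
  | insert _ _ hni ih =>
      rw [Finset.sum_insert hni, Finset.sum_insert hni, VectorMeasure.add_apply, ih]

end Stmt8Aux

open Stmt8Aux

/-- Existence and uniqueness of the quaternionic product measure with
`(μ × ν)(A × B) = μ(A)·ν(B)`. -/
theorem stmt8 {Ω Υ : Type*} [MeasurableSpace Ω] [MeasurableSpace Υ]
    (μ : VectorMeasure Ω ℍ[ℝ]) (ν : VectorMeasure Υ ℍ[ℝ]) :
    ∃! π : VectorMeasure (Ω × Υ) ℍ[ℝ],
      ∀ (A : Set Ω) (B : Set Υ), MeasurableSet A → MeasurableSet B →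
        π (A ×ˢ B) = μ A * ν B := by
  classical
  set π : VectorMeasure (Ω × Υ) ℍ[ℝ] :=
    ∑ i : Fin 4, ∑ j : Fin 4,
      (sprod (μ.mapRange (cHom i) (cHom_cont i)) (ν.mapRange (cHom j) (cHom_cont j))).mapRange
        (smulHom (e i * e j)) (smulHom_cont _) with hπ
  have hπ_apply : ∀ (A : Set Ω) (B : Set Υ), MeasurableSet A → MeasurableSet B →
      π (A ×ˢ B) = μ A * ν B := by
    intro A B hA hB
    rw [hπ, vm_sum_apply]
    have : ∀ i : Fin 4,
        (∑ j : Fin 4,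
          (sprod (μ.mapRange (cHom i) (cHom_cont i))
            (ν.mapRange (cHom j) (cHom_cont j))).mapRange
              (smulHom (e i * e j)) (smulHom_cont _)) (A ×ˢ B)
        = ∑ j : Fin 4, (cHom i (μ A) * cHom j (ν B)) • (e i * e j) := by
      intro i
      rw [vm_sum_apply]
      refine Finset.sum_congr rfl fun j _ => ?_
      rw [VectorMeasure.mapRange_apply, sprod_apply _ _ hA hB,
        VectorMeasure.mapRange_apply, VectorMeasure.mapRange_apply]
      rfl
    rw [Finset.sum_congr rfl fun i _ => this i, quat_decomp]
  refine ⟨π, hπ_apply, ?_⟩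
  intro π' hπ'
  -- uniqueness via the π-system of measurable rectangles
  refine VectorMeasure.ext fun s hs => ?_
  have huniv : π' Set.univ = π Set.univ := by
    rw [← Set.univ_prod_univ, hπ' _ _ MeasurableSet.univ MeasurableSet.univ,
      hπ_apply _ _ MeasurableSet.univ MeasurableSet.univ]
  refine MeasurableSpace.induction_on_inter (C := fun t _ => π' t = π t)
    generateFrom_prod.symm isPiSystem_prod (by simp) ?_ ?_ ?_ _ hs
  · rintro t ⟨A, hA, B, hB, rfl⟩
    rw [hπ' A B hA hB, hπ_apply A B hA hB]
  · intro t ht h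
    have h1 : π' Set.univ = π' t + π' tᶜ := by
      rw [← VectorMeasure.of_union disjoint_compl_right ht ht.compl, Set.union_compl_self]
    have h2 : π Set.univ = π t + π tᶜ := by
      rw [← VectorMeasure.of_union disjoint_compl_right ht ht.compl, Set.union_compl_self]
    have := huniv
    rw [h1, h2, h] at this
    exact add_left_cancel this
  · intro f hd hm hC
    rw [VectorMeasure.of_disjoint_iUnion hm hd, VectorMeasure.of_disjoint_iUnion hm hd]
    exact tsum_congr hC

end
end

section
/- Fix I ∈ 𝕊 and p = p₀ + I_p p₁ ∈ ℍ with p₁ > 0 and I ≠ ±I_p, and let p_I := p₀ + I p₁ ∈ ℂ_I. Then the limit as s → p_I within ℂ_I of (p - s_{I_p})^{-1}·(1 - I_p I)·(s - p_I), where s_{I_p} := s₀ + I_p s₁ for s = s₀ + I s₁, equals -(1 - I_p I). -/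
open scoped Quaternion Topology
open Filter

noncomputable section

lemma qunit_sq (J : ℍ[ℝ]) (h0 : J.re = 0) (h1 : ‖J‖ = 1) : J * J = -1 := by
  have hs : star J = -J := by ext <;> simp [h0]
  have h2 := Quaternion.self_mul_star J
  rw [hs, Quaternion.normSq_eq_norm_mul_self, h1] at h2
  simpa [mul_neg] using congrArg Neg.neg h2

lemma key_identity (I Ip : ℍ[ℝ]) (hI2 : I * I = -1) (hIp2 : Ip * Ip = -1) (a b : ℝ) :
    (1 - Ip * I) * ((a : ℍ[ℝ]) + b • I) = ((a : ℍ[ℝ]) + b • Ip) * (1 - Ip * I) := by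
  have h2 : Ip * (I * I) = -Ip := by rw [hI2, mul_neg_one]
  have h3 : Ip * Ip * I = -I := by rw [hIp2, neg_one_mul]
  simp only [mul_add, add_mul, sub_mul, mul_sub, one_mul, mul_one, mul_smul_comm,
    smul_mul_assoc, Quaternion.coe_mul_eq_smul, Quaternion.mul_coe_eq_smul,
    mul_assoc, h2, smul_neg]
  simp only [← mul_assoc, h3, smul_neg]
  module

lemma normsq_identity (Ip : ℍ[ℝ]) (hIp2 : Ip * Ip = -1) (a b : ℝ) :
    ((a : ℍ[ℝ]) + b • Ip) * ((a : ℍ[ℝ]) - b • Ip) = ((a ^ 2 + b ^ 2 : ℝ) : ℍ[ℝ]) := by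
  have hco : ∀ r : ℝ, ((r : ℍ[ℝ])) = r • (1 : ℍ[ℝ]) := fun r => by
    rw [← Quaternion.coe_mul_eq_smul, mul_one]
  simp only [hco, mul_add, add_mul, mul_sub, sub_mul, mul_smul_comm, smul_mul_assoc,
    one_mul, mul_one, hIp2, smul_neg]
  module

/-- The residue limit computation: for `p = p₀ + I_p p₁` with `p₁ > 0`,
`I ≠ ±I_p`, `p_I = p₀ + I p₁`, and `s = s₀ + I s₁ → p_I` in `ℂ_I` (s ≠ p_I),
one has `(p - s_{I_p})⁻¹ (1 - I_p I)(s - p_I) → -(1 - I_p I)`,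
where `s_{I_p} = s₀ + I_p s₁`. -/
theorem stmt17 (I Ip : ℍ[ℝ]) (hI : QUnit I) (hIp : QUnit Ip)
    (hne : I ≠ Ip ∧ I ≠ -Ip) (p₀ p₁ : ℝ) (hp₁ : 0 < p₁) :
    Tendsto
      (fun z : ℝ × ℝ =>
        (((p₀ : ℍ[ℝ]) + p₁ • Ip) - ((z.1 : ℍ[ℝ]) + z.2 • Ip))⁻¹ *
          ((1 - Ip * I) *
            (((z.1 : ℍ[ℝ]) + z.2 • I) - ((p₀ : ℍ[ℝ]) + p₁ • I))))
      (𝓝[≠] (p₀, p₁)) (𝓝 (-(1 - Ip * I))) := by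
  have hI2 : I * I = -1 := qunit_sq I hI.1 hI.2
  have hIp2 : Ip * Ip = -1 := qunit_sq Ip hIp.1 hIp.2
  apply Tendsto.congr' _ tendsto_const_nhds
  filter_upwards [self_mem_nhdsWithin] with z hz
  set a : ℝ := z.1 - p₀ with ha
  set b : ℝ := z.2 - p₁ with hb
  have hab : a ≠ 0 ∨ b ≠ 0 := by
    by_contra h
    push_neg at h
    apply hz
    have h1 : z.1 = p₀ := by have := h.1; rw [ha, sub_eq_zero] at this; exact this
    have h2 : z.2 = p₁ := by have := h.2; rw [hb, sub_eq_zero] at this; exact this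
    exact Prod.ext h1 h2
  set q : ℍ[ℝ] := (a : ℍ[ℝ]) + b • Ip with hq
  have hqmul : q * ((a : ℍ[ℝ]) - b • Ip) = ((a ^ 2 + b ^ 2 : ℝ) : ℍ[ℝ]) :=
    normsq_identity Ip hIp2 a b
  have hq0 : q ≠ 0 := by
    intro h
    have h0 : ((a ^ 2 + b ^ 2 : ℝ) : ℍ[ℝ]) = ((0 : ℝ) : ℍ[ℝ]) := by
      rw [← hqmul, h, zero_mul, Quaternion.coe_zero]
    have hsum : (a ^ 2 + b ^ 2 : ℝ) = 0 := Quaternion.coe_injective h0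
    rcases hab with h' | h'
    · have h2 : a ^ 2 ≠ 0 := pow_ne_zero 2 h'
      have : 0 < a ^ 2 := (sq_nonneg a).lt_of_ne (Ne.symm h2)
      nlinarith [sq_nonneg b]
    · have h2 : b ^ 2 ≠ 0 := pow_ne_zero 2 h'
      have : 0 < b ^ 2 := (sq_nonneg b).lt_of_ne (Ne.symm h2)
      nlinarith [sq_nonneg a]
  have key : (1 - Ip * I) * ((a : ℍ[ℝ]) + b • I) = q * (1 - Ip * I) :=
    key_identity I Ip hI2 hIp2 a b
  have lhs_eq : ((p₀ : ℍ[ℝ]) + p₁ • Ip) - ((z.1 : ℍ[ℝ]) + z.2 • Ip) = -q := by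
    rw [hq]
    have hca : ((a : ℝ) : ℍ[ℝ]) = (z.1 : ℍ[ℝ]) - (p₀ : ℍ[ℝ]) := by push_cast [ha]; ring
    rw [hca, hb, sub_smul]
    abel
  have rhs_eq : ((z.1 : ℍ[ℝ]) + z.2 • I) - ((p₀ : ℍ[ℝ]) + p₁ • I) = (a : ℍ[ℝ]) + b • I := by
    have hca : ((a : ℝ) : ℍ[ℝ]) = (z.1 : ℍ[ℝ]) - (p₀ : ℍ[ℝ]) := by push_cast [ha]; ring
    rw [hca, hb, sub_smul]
    abel
  show _ = _
  rw [lhs_eq, rhs_eq, key, inv_neg, neg_mul, ← mul_assoc, inv_mul_cancel₀ hq0, one_mul]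
end
end
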